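/- arXiv:2310.05646 — 6 statements merged into one kernel-verified Lean document; each statement's English description precedes it below -/
import Mathlib

section
/- For any n, m ∈ ℕ⁺, the matrix (P^{n,m})ᵀ P^{n,m} ∈ ℝ^{m×m} is diagonal with j-th diagonal entry ⌈jn/m⌉ − ⌈(j−1)n/m⌉; consequently, for every v ∈ ℝ^m, (⌈n/m⌉ − 1)·‖v‖₂² ≤ ‖P^{n,m} v‖₂² ≤ ⌈n/m⌉·‖v‖₂². Moreover, if n = m then P^{n,m} = I_n. -/
open MeasureTheory ProbabilityTheory Finset
open scoped ENNReal NNReal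

noncomputable section

/-- Ceiling division of naturals: `cdiv a b = ⌈a / b⌉` whenever `b > 0`. -/
def cdiv (a b : ℕ) : ℕ := (a + b - 1) / b

/-- The alignment operator `P^{n,m}`: for 1-based indices `I = i+1 ∈ [n]`, `J = j+1 ∈ [m]`,
the `(I,J)` entry is `1` if `⌈(J-1)n/m⌉ + 1 ≤ I ≤ ⌈Jn/m⌉` and `0` otherwise. -/
def alignP (n m : ℕ) : Matrix (Fin n) (Fin m) ℝ :=
  Matrix.of fun i j =>
    if cdiv (j.val * n) m < i.val + 1 ∧ i.val + 1 ≤ cdiv ((j.val + 1) * n) m then 1 else 0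

/-- The averaging alignment operator `P̃^{n,m}` (for `n ≤ m`): the `(I,J)` entry is
`1/(⌈Im/n⌉ - ⌈(I-1)m/n⌉)` if `⌈(I-1)m/n⌉ + 1 ≤ J ≤ ⌈Im/n⌉` and `0` otherwise. -/
def alignPt (n m : ℕ) : Matrix (Fin n) (Fin m) ℝ :=
  Matrix.of fun i j =>
    if cdiv (i.val * m) n < j.val + 1 ∧ j.val + 1 ≤ cdiv ((i.val + 1) * m) n
    then ((cdiv ((i.val + 1) * m) n : ℝ) - (cdiv (i.val * m) n : ℝ))⁻¹ else 0

/-- Squared `ℓ₂` norm of a vector. -/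
def sqNorm {n : ℕ} (v : Fin n → ℝ) : ℝ := ∑ i, (v i) ^ 2

/-- `‖Dθ‖₁ = Σ_{i=1}^{n-1} |θ_i - θ_{i+1}|`. -/
def dNorm1 {n : ℕ} (θ : Fin n → ℝ) : ℝ :=
  ∑ i : Fin (n - 1),
    |θ ⟨i.val, by have := i.isLt; omega⟩ - θ ⟨i.val + 1, by have := i.isLt; omega⟩|

/-- `‖Dθ‖₀`: the number of change points of `θ`. -/
def dNorm0 {n : ℕ} (θ : Fin n → ℝ) : ℕ :=
  (Finset.univ.filter fun i : Fin (n - 1) =>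
    θ ⟨i.val, by have := i.isLt; omega⟩ ≠ θ ⟨i.val + 1, by have := i.isLt; omega⟩).card

/-- `Z` is a mean-zero `σ`-sub-Gaussian random variable: it is measurable, has zero mean,
and its Orlicz `ψ₂`-norm is at most `σ`, the latter being expressed by the (equivalent)
condition that `E exp(Z²/t²) ≤ 2` for every `t > σ`. -/
def IsSubG {Ω : Type*} [MeasurableSpace Ω] (μ : Measure Ω) (σ : ℝ) (Z : Ω → ℝ) : Prop :=
  Measurable Z ∧ (∫ ω, Z ω ∂μ) = 0 ∧
    ∀ t : ℝ, σ < t →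
      (∫⁻ ω, ENNReal.ofReal (Real.exp ((Z ω) ^ 2 / t ^ 2)) ∂μ) ≤ 2

/-- The set of (1-based) change-point locations `S = {t ∈ [n-1] : f_t ≠ f_{t+1}}`. -/
def chgPts {n : ℕ} (f : Fin n → ℝ) : Finset ℕ :=
  (Finset.univ.filter fun i : Fin (n - 1) =>
    f ⟨i.val, by have := i.isLt; omega⟩ ≠ f ⟨i.val + 1, by have := i.isLt; omega⟩).image
    fun i => i.val + 1

/-- The boundaries `0 = t₀ < t₁ < ⋯ < t_{s₀} < t_{s₀+1} = n` of the blocks of `f`. -/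
def boundaries {n : ℕ} (f : Fin n → ℝ) : List ℕ :=
  0 :: ((chgPts f).sort (· ≤ ·) ++ [n])

/-- The block lengths `n_i^{(0)} = t_i - t_{i-1}`, `i ∈ [s₀+1]`. -/
def blockLengths {n : ℕ} (f : Fin n → ℝ) : List ℕ :=
  List.zipWith (fun b a => b - a) (boundaries f).tail (boundaries f)

/-- The minimal length condition (Assumption 1): `max_i n_i^{(0)} ≤ c_max · min_i n_i^{(0)}`. -/
def MinimalLength {n : ℕ} (cmax : ℝ) (f : Fin n → ℝ) : Prop :=
  ∀ a ∈ blockLengths f, ∀ b ∈ blockLengths f, (a : ℝ) ≤ cmax * (b : ℝ)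

/-- `r` is the `ℓ₂` operator (spectral) norm of the matrix `M`. -/
def IsOpNorm {n m : ℕ} (M : Matrix (Fin n) (Fin m) ℝ) (r : ℝ) : Prop :=
  0 ≤ r ∧ (∀ v, sqNorm (M.mulVec v) ≤ r ^ 2 * sqNorm v) ∧
    ∀ s : ℝ, 0 ≤ s → (∀ v, sqNorm (M.mulVec v) ≤ s ^ 2 * sqNorm v) → r ≤ s

/-- The block of the coordinate `i` determined by the cut set `M ⊆ [n-1]`:
`j` is in the block of `i` iff no cut `t ∈ M` separates them. -/
def blockOf {n : ℕ} (M : Finset (Fin (n - 1))) (i : Fin n) : Finset (Fin n) :=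
  Finset.univ.filter fun j => ∀ t ∈ M, (i.val ≤ t.val ↔ j.val ≤ t.val)

/-- The blockwise-averaging orthogonal projection `P^M`. -/
def blockProj {n : ℕ} (M : Finset (Fin (n - 1))) (v : Fin n → ℝ) : Fin n → ℝ :=
  fun i => (∑ j ∈ blockOf M i, v j) / (blockOf M i).card

/-- The multisource alignment operator `P^{{n_k}_{k=0}^K, n₀}` (with `n₀ = nk 0`). -/
def alignPMulti (K : ℕ) (nk : Fin (K + 1) → ℕ) :
    Matrix (Fin (∑ k, nk k)) (Fin (nk 0)) ℝ :=
  Matrix.of fun i j =>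
    if (∑ k, cdiv (j.val * nk k) (nk 0)) < i.val + 1 ∧
        i.val + 1 ≤ ∑ k, cdiv ((j.val + 1) * nk k) (nk 0) then 1 else 0

/-- The multisource averaging alignment operator `P̃^{n₀, {n_k}_{k=0}^K}` (with `n₀ = nk 0`). -/
def alignPtMulti (K : ℕ) (nk : Fin (K + 1) → ℕ) :
    Matrix (Fin (nk 0)) (Fin (∑ k, nk k)) ℝ :=
  Matrix.of fun i j =>
    if (∑ k, cdiv (i.val * nk k) (nk 0)) < j.val + 1 ∧
        j.val + 1 ≤ ∑ k, cdiv ((i.val + 1) * nk k) (nk 0)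
    then (((∑ k, cdiv ((i.val + 1) * nk k) (nk 0) : ℕ) : ℝ) -
          ((∑ k, cdiv (i.val * nk k) (nk 0) : ℕ) : ℝ))⁻¹ else 0

/-- `J̃_{j,k} = Σ_{k̃=0}^{k-1} ⌈j n_{k̃}/n₀⌉ + Σ_{k̃=k}^{K} ⌈(j-1) n_{k̃}/n₀⌉` (with `j` 1-based,
`n₀ = nk 0`). -/
def Jt (K : ℕ) (nk : Fin (K + 1) → ℕ) (j k : ℕ) : ℕ :=
  ∑ t : Fin (K + 1),
    if t.val < k then cdiv (j * nk t) (nk 0) else cdiv ((j - 1) * nk t) (nk 0)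

/-- The (1-based) positions `{⌈j n₁/n₀⌉ + j : j ∈ [n₀]}` occupied by the target data in the
interleaved vector. -/
def tpos (n₀ n₁ : ℕ) : Finset ℕ :=
  (Finset.range n₀).image fun j => cdiv ((j + 1) * n₁) n₀ + (j + 1)

/-- `mcount n₀ n₁ I = |{⌈j n₁/n₀⌉ + j : j ∈ [n₀]} ∩ [I]|`. -/
def mcount (n₀ n₁ I : ℕ) : ℕ := ((tpos n₀ n₁).filter (· ≤ I)).card

/-- The interleaved data vector `ỹ ∈ ℝ^{n₁+n₀}`: `ỹ_I = y_j` if `I = ⌈j n₁/n₀⌉ + j` for some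
`j ∈ [n₀]`, and otherwise `ỹ_I = y¹_{I - mcount n₀ n₁ I}`. -/
def interleave (n₀ n₁ : ℕ) (y : Fin n₀ → ℝ) (y1 : Fin n₁ → ℝ) : Fin (n₁ + n₀) → ℝ :=
  fun i =>
    if h : ∃ j : Fin n₀, i.val + 1 = cdiv ((j.val + 1) * n₁) n₀ + (j.val + 1) then y h.choose
    else if h2 : i.val - mcount n₀ n₁ (i.val + 1) < n₁ then y1 ⟨_, h2⟩ else 0

end

namespace AlignAux

lemma cdiv_le_iff {m : ℕ} (hm : 0 < m) (a c : ℕ) : cdiv a m ≤ c ↔ a ≤ c * m := by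
  unfold cdiv
  rw [Nat.div_le_iff_le_mul_add_pred hm, Nat.mul_comm m c]
  generalize c * m = X
  omega

lemma lt_cdiv_iff {m : ℕ} (hm : 0 < m) (a c : ℕ) : c < cdiv a m ↔ c * m < a := by
  rw [← Nat.not_le, ← Nat.not_le, cdiv_le_iff hm]

lemma le_cdiv_mul {m : ℕ} (hm : 0 < m) (a : ℕ) : a ≤ cdiv a m * m :=
  (cdiv_le_iff hm a (cdiv a m)).mp le_rfl

lemma cdiv_mul_lt {m : ℕ} (hm : 0 < m) (a : ℕ) : cdiv a m * m < a + m := by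
  have h : (a + m - 1) / m * m ≤ a + m - 1 := Nat.div_mul_le_self _ _
  unfold cdiv
  omega

lemma cdiv_mono {m : ℕ} (hm : 0 < m) {a b : ℕ} (h : a ≤ b) : cdiv a m ≤ cdiv b m := by
  rw [cdiv_le_iff hm]
  exact h.trans (le_cdiv_mul hm b)

lemma cdiv_add_le {m : ℕ} (hm : 0 < m) (a b : ℕ) :
    cdiv (a + b) m ≤ cdiv a m + cdiv b m := by
  rw [cdiv_le_iff hm, add_mul]
  exact Nat.add_le_add (le_cdiv_mul hm a) (le_cdiv_mul hm b)

lemma cdiv_add_ge {m : ℕ} (hm : 0 < m) (a b : ℕ) :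
    cdiv a m + cdiv b m ≤ cdiv (a + b) m + 1 := by
  by_contra hc
  push_neg at hc
  have h2 : cdiv (a + b) m + 2 ≤ cdiv a m + cdiv b m := hc
  have h3 : (cdiv (a + b) m + 2) * m ≤ (cdiv a m + cdiv b m) * m :=
    Nat.mul_le_mul_right m h2
  rw [add_mul, add_mul] at h3
  have h4 := cdiv_mul_lt hm a
  have h5 := cdiv_mul_lt hm b
  have h6 := le_cdiv_mul hm (a + b)
  have h7 : 2 * m = m + m := by ring
  omega

lemma alignP_apply (n m : ℕ) (hm : 0 < m) (i : Fin n) (j : Fin m) :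
    alignP n m i j =
      if j.val * n ≤ i.val * m ∧ i.val * m < (j.val + 1) * n then 1 else 0 := by
  unfold alignP
  simp only [Matrix.of_apply]
  congr 1
  have h1 : cdiv (j.val * n) m < i.val + 1 ↔ j.val * n ≤ i.val * m := by
    rw [Nat.lt_succ_iff, cdiv_le_iff hm]
  have h2 : i.val + 1 ≤ cdiv ((j.val + 1) * n) m ↔ i.val * m < (j.val + 1) * n := by
    rw [Nat.succ_le_iff, lt_cdiv_iff hm]
  rw [h1, h2]

end AlignAux

/-- **Lemma 1, part on `P^{n,m}`**: `(P^{n,m})ᵀ P^{n,m}` is diagonal with entries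
`⌈jn/m⌉ − ⌈(j−1)n/m⌉`, the induced quadratic-form bounds hold, and `P^{n,n} = I`. -/
theorem alignP_gram (n m : ℕ) (hn : 0 < n) (hm : 0 < m) :
    ((alignP n m).transpose * alignP n m =
        Matrix.diagonal fun j : Fin m =>
          ((cdiv ((j.val + 1) * n) m - cdiv (j.val * n) m : ℕ) : ℝ)) ∧
    (∀ v : Fin m → ℝ,
      ((cdiv n m : ℝ) - 1) * sqNorm v ≤ sqNorm ((alignP n m).mulVec v) ∧
        sqNorm ((alignP n m).mulVec v) ≤ (cdiv n m : ℝ) * sqNorm v) ∧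
    (n = m → ∀ (i : Fin n) (j : Fin m),
      alignP n m i j = if i.val = j.val then 1 else 0) := by
  classical
  obtain ⟨hm', hn'⟩ := And.intro hm hn
  have hgram : (alignP n m).transpose * alignP n m =
      Matrix.diagonal fun j : Fin m =>
        ((cdiv ((j.val + 1) * n) m - cdiv (j.val * n) m : ℕ) : ℝ) := by
    ext j k
    rw [Matrix.mul_apply]
    simp only [Matrix.transpose_apply]
    by_cases hjk : j = k
    · subst hjk
      rw [Matrix.diagonal_apply_eq]
      have hab : cdiv (j.val * n) m ≤ cdiv ((j.val + 1) * n) m :=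
        AlignAux.cdiv_mono hm (by nlinarith [j.isLt])
      have hbn : cdiv ((j.val + 1) * n) m ≤ n := by
        rw [AlignAux.cdiv_le_iff hm]
        have : j.val + 1 ≤ m := j.isLt
        nlinarith
      calc ∑ i : Fin n, alignP n m i j * alignP n m i j
          = ∑ i : Fin n, (if cdiv (j.val * n) m ≤ i.val ∧
              i.val < cdiv ((j.val + 1) * n) m then (1 : ℝ) else 0) := by
            apply Finset.sum_congr rfl
            intro i _
            unfold alignP
            simp only [Matrix.of_apply]
            by_cases h : cdiv (j.val * n) m < i.val + 1 ∧
                i.val + 1 ≤ cdiv ((j.val + 1) * n) m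
            · rw [if_pos h, if_pos (by omega)]
              norm_num
            · rw [if_neg h, if_neg (by omega)]
              norm_num
        _ = ((Finset.univ.filter fun i : Fin n => cdiv (j.val * n) m ≤ i.val ∧
              i.val < cdiv ((j.val + 1) * n) m).card : ℝ) := by
            rw [Finset.sum_boole]
        _ = ((cdiv ((j.val + 1) * n) m - cdiv (j.val * n) m : ℕ) : ℝ) := by
            congr 1
            have heq : (Finset.univ.filter fun i : Fin n => cdiv (j.val * n) m ≤ i.val ∧
                i.val < cdiv ((j.val + 1) * n) m) =
                (Finset.Ico (cdiv (j.val * n) m) (cdiv ((j.val + 1) * n) m)).attachFin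
                  (fun x hx => lt_of_lt_of_le (Finset.mem_Ico.mp hx).2 hbn) := by
              ext i
              simp [Finset.mem_attachFin, Finset.mem_Ico]
            rw [heq, Finset.card_attachFin, Nat.card_Ico]
    · rw [Matrix.diagonal_apply_ne _ hjk]
      apply Finset.sum_eq_zero
      intro i _
      rw [AlignAux.alignP_apply n m hm, AlignAux.alignP_apply n m hm]
      by_cases h1 : j.val * n ≤ i.val * m ∧ i.val * m < (j.val + 1) * n
      · rw [if_pos h1]
        rw [if_neg, mul_zero]
        rintro ⟨h2, h3⟩
        apply hjk
        have hj : j.val < k.val + 1 := by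
          by_contra hcon
          push_neg at hcon
          have : (k.val + 1) * n ≤ j.val * n := Nat.mul_le_mul_right n hcon
          omega
        have hk : k.val < j.val + 1 := by
          by_contra hcon
          push_neg at hcon
          have : (j.val + 1) * n ≤ k.val * n := Nat.mul_le_mul_right n hcon
          omega
        exact Fin.ext (by omega)
      · rw [if_neg h1, zero_mul]
  refine ⟨hgram, ?_, ?_⟩
  · intro v
    have key : sqNorm ((alignP n m).mulVec v) =
        ∑ j, ((cdiv ((j.val + 1) * n) m - cdiv (j.val * n) m : ℕ) : ℝ) * v j ^ 2 := by
      have h1 : sqNorm ((alignP n m).mulVec v) =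
          dotProduct ((alignP n m).mulVec v) ((alignP n m).mulVec v) := by
        simp [sqNorm, dotProduct, sq]
      have h2 : dotProduct ((alignP n m).mulVec v) ((alignP n m).mulVec v) =
          dotProduct v (((alignP n m).transpose * alignP n m).mulVec v) := by
        rw [← Matrix.mulVec_mulVec, Matrix.dotProduct_mulVec, Matrix.mulVec_transpose,
          dotProduct_comm]
      rw [h1, h2, hgram]
      simp only [dotProduct, Matrix.mulVec_diagonal]
      exact Finset.sum_congr rfl fun j _ => by ring
    have hdj : ∀ j : Fin m,
        ((cdiv n m : ℝ) - 1) ≤ ((cdiv ((j.val + 1) * n) m - cdiv (j.val * n) m : ℕ) : ℝ) ∧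
        ((cdiv ((j.val + 1) * n) m - cdiv (j.val * n) m : ℕ) : ℝ) ≤ (cdiv n m : ℝ) := by
      intro j
      have hab : cdiv (j.val * n) m ≤ cdiv ((j.val + 1) * n) m :=
        AlignAux.cdiv_mono hm (by nlinarith [j.isLt])
      have hs : (j.val + 1) * n = j.val * n + n := by ring
      have hup : cdiv ((j.val + 1) * n) m ≤ cdiv (j.val * n) m + cdiv n m := by
        rw [hs]; exact AlignAux.cdiv_add_le hm _ _
      have hlo : cdiv (j.val * n) m + cdiv n m ≤ cdiv ((j.val + 1) * n) m + 1 := by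
        rw [hs]; exact AlignAux.cdiv_add_ge hm _ _
      rw [Nat.cast_sub hab]
      constructor
      · have := Nat.cast_le (α := ℝ) |>.mpr hlo
        push_cast at this
        linarith
      · have := Nat.cast_le (α := ℝ) |>.mpr hup
        push_cast at this
        linarith
    rw [key]
    constructor
    · rw [sqNorm, Finset.mul_sum]
      apply Finset.sum_le_sum
      intro j _
      exact mul_le_mul_of_nonneg_right (hdj j).1 (sq_nonneg _)
    · rw [sqNorm, Finset.mul_sum]
      apply Finset.sum_le_sum
      intro j _
      exact mul_le_mul_of_nonneg_right (hdj j).2 (sq_nonneg _)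
  · intro hnm i j
    subst hnm
    rw [AlignAux.alignP_apply n n hn]
    by_cases h : i.val = j.val
    · rw [if_pos h, if_pos]
      refine ⟨le_of_eq (by rw [h]), ?_⟩
      rw [h, add_mul, one_mul]
      omega
    · rw [if_neg h, if_neg]
      rintro ⟨h1, h2⟩
      have hj : j.val ≤ i.val := Nat.le_of_mul_le_mul_right h1 hn
      have hi : i.val < j.val + 1 := by
        by_contra hcon
        push_neg at hcon
        have : (j.val + 1) * n ≤ i.val * n := Nat.mul_le_mul_right n hcon
        omega
      omega
end

section
/- For any n, m ∈ ℕ⁺ with m ≥ n: (i) P̃^{n,m} P^{m,n} = I_n; (ii) if m = n then P̃^{n,m} = I_n; and (iii) if m > n then P̃^{n,m}(P̃^{n,m})ᵀ ∈ ℝ^{n×n} is diagonal with i-th diagonal entry 1/(⌈im/n⌉ − ⌈(i−1)m/n⌉), and for every v ∈ ℝ^n, ‖v‖₂²/⌈m/n⌉ ≤ ‖(P̃^{n,m})ᵀ v‖₂² ≤ ‖v‖₂²/(⌈m/n⌉ − 1). -/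
open MeasureTheory ProbabilityTheory Finset
open scoped ENNReal NNReal

private lemma cdiv_le_iff' {n : ℕ} (hn : 0 < n) (a k : ℕ) : cdiv a n ≤ k ↔ a ≤ k * n := by
  unfold cdiv
  rw [Nat.div_le_iff_le_mul_add_pred hn, Nat.mul_comm k n]
  omega

private lemma lt_cdiv_iff' {n : ℕ} (hn : 0 < n) (a k : ℕ) : k < cdiv a n ↔ k * n < a := by
  rw [← Nat.not_le, ← Nat.not_le, cdiv_le_iff' hn]

private lemma cdiv_mono {n a b : ℕ} (h : a ≤ b) : cdiv a n ≤ cdiv b n :=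
  Nat.div_le_div_right (by omega)

private lemma cdiv_mul_lt {n : ℕ} (hn : 0 < n) (a : ℕ) : cdiv a n * n < a + n := by
  have h := Nat.div_mul_le_self (a + n - 1) n
  unfold cdiv
  omega

private lemma cdiv_lt_succ {n m : ℕ} (hn : 0 < n) (hnm : n ≤ m) (i : ℕ) :
    cdiv (i * m) n < cdiv ((i + 1) * m) n := by
  rw [lt_cdiv_iff' hn]
  have h1 := cdiv_mul_lt hn (i * m)
  have h2 : (i + 1) * m = i * m + m := by ring
  omega

private lemma cdiv_succ_le {n m : ℕ} (hn : 0 < n) (i : ℕ) :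
    cdiv ((i + 1) * m) n ≤ cdiv (i * m) n + cdiv m n := by
  rw [cdiv_le_iff' hn]
  have h1 : i * m ≤ cdiv (i * m) n * n := (cdiv_le_iff' hn _ _).mp le_rfl
  have h2 : m ≤ cdiv m n * n := (cdiv_le_iff' hn _ _).mp le_rfl
  have h3 : (cdiv (i * m) n + cdiv m n) * n = cdiv (i * m) n * n + cdiv m n * n := by ring
  have h4 : (i + 1) * m = i * m + m := by ring
  omega

private lemma cdiv_succ_ge {n m : ℕ} (hn : 0 < n) (hm : 0 < m) (i : ℕ) :
    cdiv (i * m) n + cdiv m n ≤ cdiv ((i + 1) * m) n + 1 := by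
  rcases Nat.eq_zero_or_pos i with rfl | hi
  · have h0 : cdiv (0 * m) n = 0 := by
      unfold cdiv; rw [Nat.zero_mul]; exact Nat.div_eq_of_lt (by omega)
    have : cdiv m n ≤ cdiv ((0+1)*m) n := cdiv_mono (by omega)
    omega
  · have hp : 0 < cdiv (i * m) n := (lt_cdiv_iff' hn _ 0).mpr (by simpa using Nat.mul_pos hi hm)
    have hq : 0 < cdiv m n := (lt_cdiv_iff' hn _ 0).mpr (by simpa using hm)
    have h1 : (cdiv (i * m) n - 1) * n < i * m := (lt_cdiv_iff' hn _ _).mp (by omega)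
    have h2 : (cdiv m n - 1) * n < m := (lt_cdiv_iff' hn _ _).mp (by omega)
    have h3 : cdiv (i * m) n + cdiv m n - 2 < cdiv ((i + 1) * m) n := by
      rw [lt_cdiv_iff' hn]
      have he : (cdiv (i * m) n + cdiv m n - 2) * n
          = (cdiv (i * m) n - 1) * n + (cdiv m n - 1) * n := by
        rw [← Nat.add_mul]; congr 1; omega
      have h4 : (i + 1) * m = i * m + m := by ring
      omega
    omega

private lemma sum_indicator {n m : ℕ} (hn : 0 < n) (i : Fin n) (c : ℝ) :
    (∑ k : Fin m,
      if cdiv (i.val * m) n < k.val + 1 ∧ k.val + 1 ≤ cdiv ((i.val + 1) * m) n then c else 0)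
    = ((cdiv ((i.val + 1) * m) n - cdiv (i.val * m) n : ℕ) : ℝ) * c := by
  have hfm : cdiv ((i.val + 1) * m) n ≤ m := by
    rw [cdiv_le_iff' hn]
    calc (i.val + 1) * m ≤ n * m := Nat.mul_le_mul_right m i.isLt
      _ = m * n := Nat.mul_comm n m
  rw [Fin.sum_univ_eq_sum_range
    (fun k => if cdiv (i.val * m) n < k + 1 ∧ k + 1 ≤ cdiv ((i.val + 1) * m) n then c else 0) m,
    ← Finset.sum_filter]
  have he : (Finset.range m).filter
      (fun k => cdiv (i.val * m) n < k + 1 ∧ k + 1 ≤ cdiv ((i.val + 1) * m) n)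
      = Finset.Ico (cdiv (i.val * m) n) (cdiv ((i.val + 1) * m) n) := by
    ext k
    simp only [Finset.mem_filter, Finset.mem_range, Finset.mem_Ico]
    omega
  rw [he, Finset.sum_const, Nat.card_Ico, nsmul_eq_mul]

private lemma entry_sum {n m : ℕ} (hn : 0 < n) (i j : Fin n) (a b : ℝ) :
    (∑ k : Fin m,
      (if cdiv (i.val * m) n < k.val + 1 ∧ k.val + 1 ≤ cdiv ((i.val + 1) * m) n then a else 0) *
      (if cdiv (j.val * m) n < k.val + 1 ∧ k.val + 1 ≤ cdiv ((j.val + 1) * m) n then b else 0))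
    = if i = j then ((cdiv ((i.val + 1) * m) n - cdiv (i.val * m) n : ℕ) : ℝ) * (a * b) else 0 := by
  rcases eq_or_ne i j with rfl | hij
  · rw [if_pos rfl, ← sum_indicator hn i (a * b)]
    exact Finset.sum_congr rfl fun k _ => by split <;> simp
  · rw [if_neg hij]
    apply Finset.sum_eq_zero
    intro k _
    rcases Nat.lt_or_ge i.val j.val with h | h
    · have hmono : cdiv ((i.val + 1) * m) n ≤ cdiv (j.val * m) n :=
        cdiv_mono (Nat.mul_le_mul_right m h)
      by_cases h1 : cdiv (i.val * m) n < k.val + 1 ∧ k.val + 1 ≤ cdiv ((i.val + 1) * m) n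
      · rw [if_pos h1, if_neg (by omega), mul_zero]
      · rw [if_neg h1, zero_mul]
    · have hj : j.val < i.val := by
        have := Fin.val_ne_of_ne hij; omega
      have hmono : cdiv ((j.val + 1) * m) n ≤ cdiv (i.val * m) n :=
        cdiv_mono (Nat.mul_le_mul_right m hj)
      by_cases h1 : cdiv (j.val * m) n < k.val + 1 ∧ k.val + 1 ≤ cdiv ((j.val + 1) * m) n
      · rw [if_neg (show ¬(cdiv (i.val * m) n < k.val + 1 ∧
            k.val + 1 ≤ cdiv ((i.val + 1) * m) n) by omega), zero_mul]
      · rw [if_neg h1, mul_zero]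

/-- **Lemma 1, part on `P̃^{n,m}`** (for `m ≥ n`): `P̃^{n,m} P^{m,n} = I`, `P̃^{n,n} = I`, and
for `m > n` the Gram matrix `P̃^{n,m}(P̃^{n,m})ᵀ` is diagonal with entries
`1/(⌈im/n⌉ − ⌈(i−1)m/n⌉)`, with the induced quadratic-form bounds. -/
theorem alignPt_gram (n m : ℕ) (hn : 0 < n) (hnm : n ≤ m) :
    (alignPt n m * alignP m n = 1) ∧
    (m = n → ∀ (i : Fin n) (j : Fin m),
      alignPt n m i j = if i.val = j.val then 1 else 0) ∧
    (n < m →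
      (alignPt n m * (alignPt n m).transpose =
          Matrix.diagonal fun i : Fin n =>
            (((cdiv ((i.val + 1) * m) n - cdiv (i.val * m) n : ℕ) : ℝ))⁻¹) ∧
      ∀ v : Fin n → ℝ,
        sqNorm v / (cdiv m n : ℝ) ≤ sqNorm ((alignPt n m).transpose.mulVec v) ∧
          sqNorm ((alignPt n m).transpose.mulVec v) ≤ sqNorm v / ((cdiv m n : ℝ) - 1)) := by
  have hm : 0 < m := lt_of_lt_of_le hn hnm
  have hdpos : ∀ i : Fin n, cdiv (i.val * m) n < cdiv ((i.val + 1) * m) n :=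
    fun i => cdiv_lt_succ hn hnm i.val
  set D : Fin n → ℕ := fun i => cdiv ((i.val + 1) * m) n - cdiv (i.val * m) n with hD
  have hD1 : ∀ i, 1 ≤ D i := fun i => by have := hdpos i; simp only [hD]; omega
  have hDne : ∀ i : Fin n, ((D i : ℝ)) ≠ 0 :=
    fun i => Nat.cast_ne_zero.mpr (by have := hD1 i; omega)
  have hcast : ∀ i : Fin n,
      ((cdiv ((i.val + 1) * m) n : ℝ) - (cdiv (i.val * m) n : ℝ)) = (D i : ℝ) := fun i => by
    simp only [hD]; rw [Nat.cast_sub (le_of_lt (hdpos i))]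
  refine ⟨?_, ?_, ?_⟩
  · ext i j
    rw [Matrix.mul_apply]
    simp only [alignPt, alignP, Matrix.of_apply]
    rw [entry_sum hn i j _ 1, Matrix.one_apply]
    rcases eq_or_ne i j with rfl | hij
    · rw [if_pos rfl, if_pos rfl, hcast i, mul_one, mul_inv_cancel₀ (hDne i)]
    · rw [if_neg hij, if_neg hij]
  · rintro rfl i j
    have hci : ∀ t : ℕ, cdiv (t * m) m = t := fun t => by
      unfold cdiv
      rw [show t * m + m - 1 = (m - 1) + t * m by omega,
        Nat.add_mul_div_right _ _ hm, Nat.div_eq_of_lt (by omega)]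
      omega
    simp only [alignPt, Matrix.of_apply, hci]
    split_ifs with h1 h2 h2
    · rw [show ((i.val + 1 : ℕ) : ℝ) - (i.val : ℝ) = 1 by push_cast; ring, inv_one]
    · omega
    · omega
    · rfl
  · intro hlt
    have h2c : 2 ≤ cdiv m n := (lt_cdiv_iff' hn m 1).mpr (by omega)
    have hgram : alignPt n m * (alignPt n m).transpose =
        Matrix.diagonal fun i : Fin n =>
          (((cdiv ((i.val + 1) * m) n - cdiv (i.val * m) n : ℕ) : ℝ))⁻¹ := by
      ext i j
      rw [Matrix.mul_apply]
      simp only [alignPt, Matrix.transpose_apply, Matrix.of_apply]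
      rw [entry_sum hn i j _ _]
      rcases eq_or_ne i j with rfl | hij
      · rw [if_pos rfl, Matrix.diagonal_apply_eq, hcast i, ← mul_assoc,
          mul_inv_cancel₀ (hDne i), one_mul]
      · rw [if_neg hij, Matrix.diagonal_apply_ne _ hij]
    refine ⟨hgram, ?_⟩
    intro v
    have hq : sqNorm ((alignPt n m).transpose.mulVec v) = ∑ i, (D i : ℝ)⁻¹ * v i ^ 2 := by
      have e1 : sqNorm ((alignPt n m).transpose.mulVec v)
          = dotProduct ((alignPt n m).transpose.mulVec v)
              ((alignPt n m).transpose.mulVec v) := by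
        simp [sqNorm, dotProduct, sq]
      rw [e1, Matrix.dotProduct_mulVec, Matrix.vecMul_transpose, Matrix.mulVec_mulVec, hgram]
      simp only [Matrix.mulVec_diagonal, dotProduct]
      exact Finset.sum_congr rfl fun i _ => by simp only [hD]; ring
    have hDle : ∀ i : Fin n, (D i : ℝ) ≤ (cdiv m n : ℝ) := fun i => by
      have := cdiv_succ_le (m := m) hn i.val
      exact_mod_cast (by simp only [hD]; omega : D i ≤ cdiv m n)
    have hDge : ∀ i : Fin n, (cdiv m n : ℝ) - 1 ≤ (D i : ℝ) := fun i => by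
      have h := cdiv_succ_ge hn hm i.val
      have : cdiv m n ≤ D i + 1 := by simp only [hD]; omega
      have := (Nat.cast_le (α := ℝ)).mpr this
      push_cast at this
      linarith
    have hDposR : ∀ i : Fin n, (0 : ℝ) < (D i : ℝ) := fun i => by
      have := hD1 i; exact_mod_cast Nat.pos_of_ne_zero (by omega)
    have hcpos : (0 : ℝ) < (cdiv m n : ℝ) - 1 := by
      have := (Nat.cast_le (α := ℝ)).mpr h2c; push_cast at this; linarith
    constructor
    · rw [hq, sqNorm, Finset.sum_div]
      apply Finset.sum_le_sum
      intro i _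
      rw [div_eq_mul_inv, mul_comm]
      apply mul_le_mul_of_nonneg_right _ (sq_nonneg _)
      exact inv_anti₀ (hDposR i) (hDle i)
    · rw [hq, sqNorm, Finset.sum_div]
      apply Finset.sum_le_sum
      intro i _
      rw [div_eq_mul_inv, mul_comm (v i ^ 2)]
      apply mul_le_mul_of_nonneg_right _ (sq_nonneg _)
      exact inv_anti₀ hcpos (hDge i)
end

section
/- For any n, m ∈ ℕ⁺ with m ≥ n and any vector v ∈ ℝ^m, it holds that ‖P̃^{n,m} v‖₂² ≤ 2(n/m)·‖v‖₂². -/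
open MeasureTheory ProbabilityTheory Finset
open scoped ENNReal NNReal

/-! Row `i` of `P̃^{n,m}` averages `v` over the block `⌈im/n⌉ ≤ j < ⌈(i+1)m/n⌉`, whose length is
at least `⌊m/n⌋ ≥ m/(2n)` once `m ≥ n`. By Cauchy–Schwarz the square of that average is at most
`2n/m` times the sum of `v_j²` over the block, and the blocks are disjoint. -/

open Function
open scoped Matrix

lemma cdiv_mono_left (b : ℕ) : Monotone fun a => cdiv a b :=
  fun _ _ h => Nat.div_le_div_right (by omega)

lemma cdiv_add_div_le (a c : ℕ) {b : ℕ} (hb : 0 < b) : cdiv a b + c / b ≤ cdiv (a + c) b := by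
  unfold cdiv
  calc (a + b - 1) / b + c / b ≤ (a + b - 1 + c) / b := Nat.div_add_div_le_add_div
    _ = (a + c + b - 1) / b := by congr 1; omega

lemma le_two_mul_mul_div {n m : ℕ} (hn : 0 < n) (hnm : n ≤ m) : m ≤ 2 * n * (m / n) := by
  have hq : 1 ≤ m / n := (Nat.one_le_div_iff hn).2 hnm
  nlinarith [Nat.div_add_mod m n, Nat.mod_lt m hn]

lemma sq_inv_mul_sum_le {ι : Type*} (s : Finset ι) (f : ι → ℝ) {L : ℝ} (hL : (#s : ℝ) ≤ L) :
    (L⁻¹ * ∑ i ∈ s, f i) ^ 2 ≤ L⁻¹ * ∑ i ∈ s, f i ^ 2 := by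
  have hsq : 0 ≤ ∑ i ∈ s, f i ^ 2 := sum_nonneg fun i _ => sq_nonneg (f i)
  calc (L⁻¹ * ∑ i ∈ s, f i) ^ 2 = L⁻¹ ^ 2 * (∑ i ∈ s, f i) ^ 2 := by ring
    _ ≤ L⁻¹ ^ 2 * (L * ∑ i ∈ s, f i ^ 2) := by
        gcongr
        exact sq_sum_le_card_mul_sum_sq.trans (mul_le_mul_of_nonneg_right hL hsq)
    _ = L⁻¹ * ∑ i ∈ s, f i ^ 2 := by
        rcases eq_or_ne L 0 with rfl | hL0
        · simp
        · field_simp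

section AlignBlock

variable (n m : ℕ)

/-- The support of row `i` of `alignPt n m`. -/
def alignBlock (i : ℕ) : Finset (Fin m) :=
  univ.filter fun j => cdiv (i * m) n ≤ j.val ∧ j.val < cdiv ((i + 1) * m) n

def alignBlockLen (i : ℕ) : ℕ := cdiv ((i + 1) * m) n - cdiv (i * m) n

lemma cdiv_mul_le_cdiv_succ_mul (i : ℕ) : cdiv (i * m) n ≤ cdiv ((i + 1) * m) n :=
  cdiv_mono_left n (Nat.mul_le_mul_right m i.le_succ)

lemma card_alignBlock_le (i : ℕ) : #(alignBlock n m i) ≤ alignBlockLen n m i := by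
  calc #(alignBlock n m i) ≤ #(Ico (cdiv (i * m) n) (cdiv ((i + 1) * m) n)) :=
        card_le_card_of_injOn Fin.val (fun j hj => by simpa [alignBlock] using hj)
          Fin.val_injective.injOn
    _ = alignBlockLen n m i := Nat.card_Ico _ _

lemma pairwise_disjoint_alignBlock : Pairwise (Disjoint on alignBlock n m) := by
  have hlt : ∀ {i i' : ℕ}, i < i' → Disjoint (alignBlock n m i) (alignBlock n m i') := by
    intro i i' hii'
    have hle : cdiv ((i + 1) * m) n ≤ cdiv (i' * m) n :=
      cdiv_mono_left n (Nat.mul_le_mul_right m hii')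
    refine disjoint_left.2 fun j hj hj' => ?_
    simp only [alignBlock, mem_filter] at hj hj'
    omega
  intro i i' hne
  rcases Nat.lt_or_gt_of_ne hne with h | h
  exacts [hlt h, (hlt h).symm]

lemma sum_sum_alignBlock_le {f : Fin m → ℝ} (hf : ∀ j, 0 ≤ f j) :
    ∑ i : Fin n, ∑ j ∈ alignBlock n m i, f j ≤ ∑ j, f j := by
  have hdisj : ((univ : Finset (Fin n)) : Set (Fin n)).PairwiseDisjoint
      fun i => alignBlock n m i :=
    ((pairwise_disjoint_alignBlock n m).comp_of_injective Fin.val_injective).set_pairwise _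
  rw [← sum_biUnion hdisj]
  exact sum_le_univ_sum_of_nonneg hf

lemma alignPt_mulVec_apply (v : Fin m → ℝ) (i : Fin n) :
    (alignPt n m *ᵥ v) i = (alignBlockLen n m i : ℝ)⁻¹ * ∑ j ∈ alignBlock n m i, v j := by
  have hlen : ((cdiv ((i.val + 1) * m) n : ℝ) - (cdiv (i.val * m) n : ℝ)) =
      alignBlockLen n m i := by
    rw [alignBlockLen, Nat.cast_sub (cdiv_mul_le_cdiv_succ_mul n m i)]
  simp only [Matrix.mulVec, dotProduct, alignPt, Matrix.of_apply, hlen, ite_mul, zero_mul,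
    alignBlock, mul_sum, sum_filter, mul_ite, mul_zero]
  refine sum_congr rfl fun j _ => if_congr ?_ rfl rfl
  omega

end AlignBlock

lemma le_two_mul_mul_alignBlockLen {n m : ℕ} (hn : 0 < n) (hnm : n ≤ m) (i : ℕ) :
    m ≤ 2 * n * alignBlockLen n m i := by
  have hgap : cdiv (i * m) n + m / n ≤ cdiv ((i + 1) * m) n := by
    simpa [add_mul] using cdiv_add_div_le (i * m) m hn
  calc m ≤ 2 * n * (m / n) := le_two_mul_mul_div hn hnm
    _ ≤ 2 * n * alignBlockLen n m i := by
        gcongr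
        unfold alignBlockLen
        omega

lemma sq_alignPt_mulVec_apply_le {n m : ℕ} (hnm : n ≤ m) (v : Fin m → ℝ) (i : Fin n) :
    (alignPt n m *ᵥ v) i ^ 2 ≤ 2 * ((n : ℝ) / m) * ∑ j ∈ alignBlock n m i, v j ^ 2 := by
  have hn : 0 < n := i.pos
  have hlen := le_two_mul_mul_alignBlockLen hn hnm i
  have hlen_pos : (0 : ℝ) < alignBlockLen n m i := by
    have : 0 < alignBlockLen n m i := by nlinarith
    exact_mod_cast this
  have hm : (0 : ℝ) < m := by exact_mod_cast hn.trans_le hnm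
  have hinv : (alignBlockLen n m i : ℝ)⁻¹ ≤ 2 * ((n : ℝ) / m) := by
    rw [inv_le_iff_one_le_mul₀ hlen_pos, mul_div_assoc', div_mul_eq_mul_div, one_le_div₀ hm]
    exact_mod_cast hlen
  rw [alignPt_mulVec_apply]
  refine (sq_inv_mul_sum_le _ _ (by exact_mod_cast card_alignBlock_le n m i)).trans ?_
  exact mul_le_mul_of_nonneg_right hinv (sum_nonneg fun j _ => sq_nonneg (v j))

theorem alignPt_contraction_general (n m : ℕ) (hnm : n ≤ m) (v : Fin m → ℝ) :
    sqNorm ((alignPt n m).mulVec v) ≤ 2 * ((n : ℝ) / m) * sqNorm v := by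
  calc sqNorm (alignPt n m *ᵥ v)
      ≤ ∑ i : Fin n, 2 * ((n : ℝ) / m) * ∑ j ∈ alignBlock n m i, v j ^ 2 :=
        sum_le_sum fun i _ => sq_alignPt_mulVec_apply_le hnm v i
    _ = 2 * ((n : ℝ) / m) * ∑ i : Fin n, ∑ j ∈ alignBlock n m i, v j ^ 2 := (mul_sum _ _ _).symm
    _ ≤ 2 * ((n : ℝ) / m) * sqNorm v := by
        gcongr
        exact sum_sum_alignBlock_le n m fun j => sq_nonneg (v j)

/-- **Lemma 3**: `‖P̃^{n,m} v‖₂² ≤ 2(n/m)‖v‖₂²` for `m ≥ n`. -/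
theorem alignPt_contraction (n m : ℕ) (hn : 0 < n) (hnm : n ≤ m) (v : Fin m → ℝ) :
    sqNorm ((alignPt n m).mulVec v) ≤ 2 * ((n : ℝ) / m) * sqNorm v :=
  alignPt_contraction_general n m hnm v
end

section
/- Let n₀, n_k ∈ ℕ⁺ with n_k ≥ n₀. Then for every v ∈ ℝ^{n₀}, (n_k/(2n₀))·‖v‖₂² ≤ ‖P^{n_k,n₀} v‖₂² ≤ (2n_k/n₀)·‖v‖₂². Equivalently, every eigenvalue of (P^{n_k,n₀})ᵀ P^{n_k,n₀} lies in the interval [n_k/(2n₀), 2n_k/n₀]. -/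
open MeasureTheory ProbabilityTheory Finset
open scoped ENNReal NNReal

lemma cdiv_facts (a b : ℕ) (hb : 0 < b) : a ≤ b * cdiv a b ∧ b * cdiv a b ≤ a + b - 1 := by
  have h1 := Nat.div_add_mod (a + b - 1) b
  have h2 := Nat.mod_lt (a + b - 1) hb
  unfold cdiv
  omega


/-!
Row `i` of `P^{n,m}` has a single `1`, in the column `j` whose block `[⌈jn/m⌉, ⌈(j+1)n/m⌉)`
contains `i`; hence `‖P v‖² = ∑ⱼ wⱼ vⱼ²` with `wⱼ` the length of block `j`. The ceilings put
`m wⱼ` within `m` of `n`, and for `m ≤ n` every block is nonempty, so `n/(2m) ≤ wⱼ ≤ 2n/m`.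
-/

def intervalMatrix (n m : ℕ) (b : ℕ → ℕ) : Matrix (Fin n) (Fin m) ℝ :=
  Matrix.of fun i j => if b j ≤ i ∧ i < b (j + 1) then 1 else 0

section IntervalMatrix

variable {n m : ℕ} {b : ℕ → ℕ}

theorem Monotone.existsUnique_mem_Ico (hb : Monotone b) (hb0 : b 0 = 0) {i : ℕ} (hi : i < b m) :
    ∃! j, j < m ∧ b j ≤ i ∧ i < b (j + 1) := by
  have hm : 0 < m := Nat.pos_of_ne_zero fun h => by simp [h, hb0] at hi
  have hex : ∃ j, i < b (j + 1) := ⟨m - 1, by rwa [Nat.sub_add_cancel hm]⟩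
  refine ⟨Nat.find hex, ⟨?_, ?_, Nat.find_spec hex⟩, ?_⟩
  · by_contra! hmj
    exact Nat.find_min hex (by omega : Nat.find hex - 1 < Nat.find hex)
      (hi.trans_le (hb (by omega)))
  · rcases h : Nat.find hex with _ | k
    · simp [hb0]
    · exact not_lt.1 (Nat.find_min hex (by omega : k < Nat.find hex))
  · rintro j ⟨-, hj, hij⟩
    refine le_antisymm (not_lt.1 fun hlt => ?_) (Nat.find_min' hex hij)
    exact absurd ((Nat.find_spec hex).trans_le (hb hlt)) (not_lt.2 hj)

theorem intervalMatrix_row_sum (hb : Monotone b) (hb0 : b 0 = 0) (hbm : b m = n) (i : Fin n) :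
    ∃ j : Fin m, ∀ g : Fin m → ℝ, ∑ k, intervalMatrix n m b i k * g k = g j := by
  obtain ⟨j, ⟨hjm, hj⟩, huniq⟩ :=
    hb.existsUnique_mem_Ico hb0 (i := i) (by rw [hbm]; exact i.isLt)
  refine ⟨⟨j, hjm⟩, fun g => ?_⟩
  rw [Finset.sum_eq_single_of_mem (⟨j, hjm⟩ : Fin m) (Finset.mem_univ _)]
  · simp [intervalMatrix, hj]
  · intro k _ hk
    have : ¬(b k ≤ i ∧ i < b (k + 1)) := fun h => hk (Fin.ext (huniq k ⟨k.isLt, h⟩))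
    simp [intervalMatrix, this]

theorem intervalMatrix_col_sum (hb : Monotone b) (hbm : b m = n) (j : Fin m) :
    ∑ i, intervalMatrix n m b i j = ((b (j + 1) - b j : ℕ) : ℝ) := by
  have hbn : b (j + 1) ≤ n := hbm ▸ hb j.isLt
  simp only [intervalMatrix, Matrix.of_apply]
  rw [Fin.sum_univ_eq_sum_range (fun i => if b j ≤ i ∧ i < b (j + 1) then (1 : ℝ) else 0),
    Finset.sum_boole, ← Nat.card_Ico]
  congr 2
  ext i
  simp only [Finset.mem_filter, Finset.mem_range, Finset.mem_Ico]
  omega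

theorem sqNorm_intervalMatrix_mulVec (hb : Monotone b) (hb0 : b 0 = 0) (hbm : b m = n)
    (v : Fin m → ℝ) :
    sqNorm ((intervalMatrix n m b).mulVec v) =
      ∑ j : Fin m, ((b (j + 1) - b j : ℕ) : ℝ) * v j ^ 2 := by
  have hrow : ∀ i, (intervalMatrix n m b).mulVec v i ^ 2 =
      ∑ j, intervalMatrix n m b i j * v j ^ 2 := fun i => by
    obtain ⟨j, hj⟩ := intervalMatrix_row_sum hb hb0 hbm i
    rw [Matrix.mulVec, dotProduct, hj, hj]
  simp only [sqNorm, hrow]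
  rw [Finset.sum_comm]
  simp only [← Finset.sum_mul, intervalMatrix_col_sum hb hbm]

end IntervalMatrix

section CeilDiv

theorem cdiv_mono_s17 (m : ℕ) : Monotone (cdiv · m) := fun _ _ h =>
  Nat.div_le_div_right (Nat.sub_le_sub_right (Nat.add_le_add_right h m) 1)

theorem cdiv_zero_left (m : ℕ) : cdiv 0 m = 0 :=
  zero_ceilDiv m

variable {m : ℕ}

theorem cdiv_add_self (a : ℕ) (hm : 0 < m) : cdiv (a + m) m = cdiv a m + 1 := by
  unfold cdiv
  rw [show a + m + m - 1 = a + m - 1 + m by omega, Nat.add_div_right _ hm]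

theorem mul_cdiv_bounds (a : ℕ) (hm : 0 < m) : a ≤ m * cdiv a m ∧ m * cdiv a m < a + m := by
  have := Nat.div_add_mod (a + m - 1) m
  have := Nat.mod_lt (a + m - 1) hm
  unfold cdiv
  omega

theorem cdiv_mul_self_left (k : ℕ) (hm : 0 < m) : cdiv (m * k) m = k := by
  unfold cdiv
  rw [show m * k + m - 1 = (m - 1) + m * k by omega, Nat.add_mul_div_left _ _ hm,
    Nat.div_eq_of_lt (by omega), zero_add]

theorem cdiv_add_sub_cdiv_mem_Icc {n : ℕ} (hm : 0 < m) (hmn : m ≤ n) (a : ℕ) :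
    ((cdiv (a + n) m - cdiv a m : ℕ) : ℝ) ∈ Set.Icc ((n : ℝ) / (2 * m)) (2 * n / m) := by
  have step : cdiv a m + 1 ≤ cdiv (a + n) m :=
    cdiv_add_self a hm ▸ cdiv_mono_s17 m (by omega : a + m ≤ a + n)
  obtain ⟨w, hw⟩ := Nat.exists_eq_add_of_le step
  obtain ⟨h1, h2⟩ := mul_cdiv_bounds a hm
  obtain ⟨h3, h4⟩ := mul_cdiv_bounds (a + n) hm
  rw [hw] at h3 h4 ⊢
  rw [show cdiv a m + 1 + w - cdiv a m = w + 1 by omega]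
  have hlo : n ≤ 2 * m * (w + 1) := by nlinarith
  have hhi : m * (w + 1) ≤ 2 * n := by nlinarith
  have hm' : (0 : ℝ) < m := by exact_mod_cast hm
  constructor
  · rw [div_le_iff₀ (by positivity)]
    exact_mod_cast (by linarith : n ≤ (w + 1) * (2 * m))
  · rw [le_div_iff₀ hm']
    exact_mod_cast (by linarith : (w + 1) * m ≤ 2 * n)

end CeilDiv

theorem alignP_eq_intervalMatrix (n m : ℕ) :
    alignP n m = intervalMatrix n m (fun j => cdiv (j * n) m) := by
  ext i j
  simp only [alignP, intervalMatrix, Matrix.of_apply, Nat.lt_succ_iff, Nat.succ_le_iff]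

/-- **Eigenvalue bounds for `(P^{n_k,n₀})ᵀ P^{n_k,n₀}`** when `n_k ≥ n₀`:
`(n_k/(2n₀))‖v‖₂² ≤ ‖P^{n_k,n₀} v‖₂² ≤ (2n_k/n₀)‖v‖₂²`. -/
theorem alignP_quadratic_bounds (n₀ nkk : ℕ) (hn₀ : 0 < n₀) (hle : n₀ ≤ nkk)
    (v : Fin n₀ → ℝ) :
    (nkk : ℝ) / (2 * n₀) * sqNorm v ≤ sqNorm ((alignP nkk n₀).mulVec v) ∧
      sqNorm ((alignP nkk n₀).mulVec v) ≤ 2 * (nkk : ℝ) / n₀ * sqNorm v := by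
  have hmono : Monotone fun j => cdiv (j * nkk) n₀ :=
    (cdiv_mono_s17 n₀).comp fun _ _ h => Nat.mul_le_mul_right nkk h
  have hlast : cdiv (n₀ * nkk) n₀ = nkk := cdiv_mul_self_left nkk hn₀
  rw [alignP_eq_intervalMatrix,
    sqNorm_intervalMatrix_mulVec hmono (by simp [cdiv_zero_left]) hlast]
  have hw (j : ℕ) := cdiv_add_sub_cdiv_mem_Icc hn₀ hle (j * nkk)
  simp only [← add_one_mul] at hw
  unfold sqNorm
  rw [Finset.mul_sum, Finset.mul_sum]
  constructor <;> gcongr with j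
  exacts [(hw j).1, (hw j).2]
end

section
/- Let n₀ ∈ ℕ⁺, K ∈ ℕ, and n_0, n_1, …, n_K ∈ ℕ⁺ with n_0 = n₀. Then for every i ∈ [n₀], the quantity H̃_i = Σ_{k=0}^{K} (⌈i n_k/n₀⌉ − ⌈(i−1) n_k/n₀⌉) satisfies H̃_i ≥ (Σ_{k=0}^{K} n_k·1{n_k ≥ n₀})/(2n₀) > 0. -/
open MeasureTheory ProbabilityTheory Finset
open scoped ENNReal NNReal

lemma cdiv_mul_self' (a n : ℕ) (hn : 0 < n) : cdiv (a * n) n = a := by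
  unfold cdiv
  have h1 : a * n + n - 1 = n * a + (n - 1) := by rw [Nat.mul_comm]; omega
  rw [h1, Nat.mul_add_div hn, Nat.div_eq_of_lt (by omega)]
  omega

lemma cdiv_step' (j m n : ℕ) (hn : 0 < n) :
    cdiv (j * m) n + m / n ≤ cdiv ((j + 1) * m) n := by
  unfold cdiv
  have hm : m / n * n ≤ m := Nat.div_mul_le_self m n
  have hjm : (j + 1) * m = j * m + m := by ring
  calc (j * m + n - 1) / n + m / n
      = ((j * m + n - 1) + m / n * n) / n := (Nat.add_mul_div_right _ _ hn).symm
    _ ≤ ((j + 1) * m + n - 1) / n := Nat.div_le_div_right (by omega)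

/-- **Lemma 8**: lower bound on the blocks sizes `H̃_i = Σ_{k=0}^K (⌈i n_k/n₀⌉ − ⌈(i−1)n_k/n₀⌉)`,
where `n₀ = nk 0`. -/
theorem multisource_block_size_lower_bound (n₀ K : ℕ) (hn₀ : 0 < n₀)
    (nk : Fin (K + 1) → ℕ) (hnk : ∀ k, 0 < nk k) (h0 : nk 0 = n₀)
    (i : ℕ) (hi1 : 1 ≤ i) (hi2 : i ≤ n₀) :
    (∑ k, if n₀ ≤ nk k then (nk k : ℝ) else 0) / (2 * n₀) ≤
        ((∑ k, (cdiv (i * nk k) n₀ - cdiv ((i - 1) * nk k) n₀) : ℕ) : ℝ) ∧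
      0 < ∑ k, (cdiv (i * nk k) n₀ - cdiv ((i - 1) * nk k) n₀) := by
  set f : Fin (K + 1) → ℕ := fun k => cdiv (i * nk k) n₀ - cdiv ((i - 1) * nk k) n₀ with hf
  have hstep : ∀ k, cdiv ((i - 1) * nk k) n₀ + nk k / n₀ ≤ cdiv (i * nk k) n₀ := by
    intro k
    have h := cdiv_step' (i - 1) (nk k) n₀ hn₀
    rwa [Nat.sub_add_cancel hi1] at h
  have hterm : ∀ k, (if n₀ ≤ nk k then nk k else 0) ≤ f k * (2 * n₀) := by
    intro k
    split
    · next h =>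
      have hq1 : 1 ≤ nk k / n₀ := (Nat.one_le_div_iff hn₀).mpr h
      have hfq : nk k / n₀ ≤ f k := by
        have := hstep k; simp only [hf]; omega
      have h1 : n₀ * (nk k / n₀) + nk k % n₀ = nk k := Nat.div_add_mod _ _
      have h2 : nk k % n₀ < n₀ := Nat.mod_lt _ hn₀
      have h3 : (nk k / n₀) * (2 * n₀) ≤ f k * (2 * n₀) :=
        Nat.mul_le_mul_right _ hfq
      have h4 : (nk k / n₀) * (2 * n₀) = 2 * (n₀ * (nk k / n₀)) := by ring
      have h5 : n₀ * 1 ≤ n₀ * (nk k / n₀) := Nat.mul_le_mul_left _ hq1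
      omega
    · omega
  have hsum : (∑ k, if n₀ ≤ nk k then nk k else 0) ≤ (∑ k, f k) * (2 * n₀) := by
    rw [Finset.sum_mul]
    exact Finset.sum_le_sum fun k _ => hterm k
  constructor
  · rw [div_le_iff₀ (by positivity)]
    have hcast : (∑ k, if n₀ ≤ nk k then (nk k : ℝ) else 0) =
        ((∑ k, if n₀ ≤ nk k then nk k else 0 : ℕ) : ℝ) := by
      push_cast
      exact Finset.sum_congr rfl fun k _ => by split <;> simp
    rw [hcast]
    calc ((∑ k, if n₀ ≤ nk k then nk k else 0 : ℕ) : ℝ)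
        ≤ (((∑ k, f k) * (2 * n₀) : ℕ) : ℝ) := by exact_mod_cast hsum
      _ = ((∑ k, f k : ℕ) : ℝ) * (2 * n₀) := by push_cast; ring
  · have hf0 : f 0 = 1 := by
      simp only [hf, h0, cdiv_mul_self' i n₀ hn₀, cdiv_mul_self' (i - 1) n₀ hn₀]
      omega
    have hle := Finset.single_le_sum (f := f) (fun k _ => Nat.zero_le _) (Finset.mem_univ 0)
    show 0 < ∑ k, f k
    omega
end

section
/- Let n₀ ∈ ℕ⁺, K ∈ ℕ, and n_0, n_1, …, n_K ∈ ℕ⁺ with n_0 = n₀, and set N = Σ_{k=0}^{K} n_k·1{n_k ≥ n₀}. Then: (i) P̃^{n₀,{n_k}_{k=0}^K} · P^{{n_k}_{k=0}^K, n₀} = I_{n₀}; and (ii) for every v ∈ ℝ^{Σ_{k=0}^K n_k}, ‖P̃^{n₀,{n_k}_{k=0}^K} v‖₂² ≤ (2n₀/N)·‖v‖₂² (equivalently, the squared ℓ2 operator norm of P̃^{n₀,{n_k}_{k=0}^K} is at most 2n₀/N). -/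
open MeasureTheory ProbabilityTheory Finset
open scoped ENNReal NNReal

/-!
Both operators are cut along `S(j) = Σ_k ⌈j n_k / n₀⌉`. The summand `k = 0` equals `j`, so `S` is
strictly increasing and its blocks `B_j = [S(j), S(j+1))` are nonempty, disjoint and end at
`S(n₀) = Σ_k n_k`. `P̃` averages over `B_j` and `P` spreads coordinate `j` over `B_j`, hence
`P̃ P = I`. By Cauchy–Schwarz `‖P̃ v‖² ≤ Σ_j |B_j|⁻¹ ‖v|B_j‖²`, and every source with `n_k ≥ n₀`
contributes at least `⌊n_k / n₀⌋ ≥ n_k / (2 n₀)` to `|B_j|`, so `|B_j| ≥ N / (2 n₀)`.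
-/

lemma cdiv_le_cdiv {a b : ℕ} (n : ℕ) (h : a ≤ b) : cdiv a n ≤ cdiv b n :=
  Nat.div_le_div_right (by omega)

lemma cdiv_mul_cancel_left {n : ℕ} (hn : 0 < n) (j : ℕ) : cdiv (n * j) n = j :=
  smul_ceilDiv hn j

lemma cdiv_add_div_le_s19 (a m : ℕ) {n : ℕ} (hn : 0 < n) : cdiv a n + m / n ≤ cdiv (a + m) n :=
  calc (a + n - 1) / n + m / n ≤ (a + n - 1 + m) / n := Nat.div_add_div_le_add_div
    _ = (a + m + n - 1) / n := by congr 1; omega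

lemma le_two_mul_cdiv_sub_cdiv {n m : ℕ} (hn : 0 < n) (h : n ≤ m) (j : ℕ) :
    m ≤ 2 * n * (cdiv ((j + 1) * m) n - cdiv (j * m) n) := by
  have hgap : m / n ≤ cdiv ((j + 1) * m) n - cdiv (j * m) n := by
    have := cdiv_add_div_le_s19 (j * m) m hn
    rw [show j * m + m = (j + 1) * m by ring] at this
    omega
  have hquot : 1 ≤ m / n := (Nat.one_le_div_iff hn).mpr h
  have hdiv := Nat.div_add_mod m n
  have hmod := Nat.mod_lt m hn
  nlinarith

section Blocks

open scoped Matrix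

variable {s : ℕ → ℕ} {n m : ℕ}

/-- With 0-based indices, `block s m i` is `[s i, s (i + 1)) ∩ [0, m)`; the conditions are written
as in `alignPtMulti` so that the block matrices unfold to it by `rfl`. -/
def block (s : ℕ → ℕ) (m i : ℕ) : Finset (Fin m) :=
  univ.filter fun l => s i < l.val + 1 ∧ l.val + 1 ≤ s (i + 1)

noncomputable def blockAvg (s : ℕ → ℕ) (n m : ℕ) : Matrix (Fin n) (Fin m) ℝ :=
  Matrix.of fun i l =>
    if s i < l.val + 1 ∧ l.val + 1 ≤ s (i.val + 1) then ((s (i.val + 1) : ℝ) - s i)⁻¹ else 0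

def blockInd (s : ℕ → ℕ) (m n : ℕ) : Matrix (Fin m) (Fin n) ℝ :=
  Matrix.of fun l j => if s j < l.val + 1 ∧ l.val + 1 ≤ s (j.val + 1) then 1 else 0

lemma blockInd_apply (l : Fin m) (j : Fin n) :
    blockInd s m n l j = if l ∈ block s m j then 1 else 0 := by
  simp [blockInd, block]

lemma blockAvg_mulVec_apply (v : Fin m → ℝ) (i : Fin n) :
    (blockAvg s n m *ᵥ v) i = ((s (i.val + 1) : ℝ) - s i)⁻¹ * ∑ l ∈ block s m i, v l := by
  simp only [Matrix.mulVec, dotProduct, blockAvg, block, Matrix.of_apply, mul_sum, sum_filter]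
  exact sum_congr rfl fun l _ => by split_ifs <;> simp

lemma map_val_block (i : ℕ) :
    (block s m i).map Fin.valEmbedding = Ico (s i) (min (s (i + 1)) m) := by
  ext l
  simp only [block, mem_map, mem_filter, mem_univ, true_and, Fin.valEmbedding_apply, mem_Ico]
  constructor
  · rintro ⟨l, hl, rfl⟩
    omega
  · intro hl
    exact ⟨⟨l, by omega⟩, by simp only; omega, rfl⟩

lemma card_block (i : ℕ) : #(block s m i) = min (s (i + 1)) m - s i := by
  rw [← card_map Fin.valEmbedding, map_val_block, Nat.card_Ico]

lemma disjoint_block (hs : Monotone s) {i j : ℕ} (hij : i ≠ j) :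
    Disjoint (block s m i) (block s m j) := by
  wlog hlt : i < j generalizing i j
  · exact (this hij.symm (by omega)).symm
  have := hs (show i + 1 ≤ j by omega)
  rw [disjoint_left]
  intro l hli hlj
  simp only [block, mem_filter, mem_univ, true_and] at hli hlj
  omega

theorem blockAvg_mul_blockInd (hs : Monotone s) (hlt : ∀ i < n, s i < s (i + 1))
    (hle : ∀ i < n, s (i + 1) ≤ m) : blockAvg s n m * blockInd s m n = 1 := by
  ext i j
  change (blockAvg s n m *ᵥ fun l => blockInd s m n l j) i = _
  simp only [blockAvg_mulVec_apply, blockInd_apply, sum_boole, Matrix.one_apply]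
  split_ifs with hij
  · subst hij
    rw [filter_true_of_mem fun _ h => h, card_block, min_eq_left (hle i i.isLt),
      Nat.cast_sub (hlt i i.isLt).le]
    exact inv_mul_cancel₀ (sub_ne_zero.mpr (by exact_mod_cast (hlt i i.isLt).ne'))
  · rw [filter_false_of_mem fun l hl => disjoint_left.mp
      (disjoint_block hs (Fin.val_injective.ne hij)) hl]
    simp

lemma sq_blockAvg_mulVec_le (hs : Monotone s) (v : Fin m → ℝ) (i : Fin n) :
    (blockAvg s n m *ᵥ v) i ^ 2 ≤
      ((s (i.val + 1) : ℝ) - s i)⁻¹ * ∑ l ∈ block s m i, v l ^ 2 := by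
  rw [blockAvg_mulVec_apply]
  have hsi := hs (Nat.le_add_right i.val 1)
  have hcard : (#(block s m i) : ℝ) ≤ (s (i.val + 1) : ℝ) - s i := by
    rw [← Nat.cast_sub hsi, Nat.cast_le, card_block]
    omega
  set d : ℝ := (s (i.val + 1) : ℝ) - s i
  have hCS : (∑ l ∈ block s m i, v l) ^ 2 ≤ d * ∑ l ∈ block s m i, v l ^ 2 :=
    sq_sum_le_card_mul_sum_sq.trans
      (mul_le_mul_of_nonneg_right hcard (sum_nonneg fun _ _ => sq_nonneg _))
  rcases (Nat.cast_nonneg _ |>.trans hcard).eq_or_lt with hd | hd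
  · simp [← hd]
  calc (d⁻¹ * ∑ l ∈ block s m i, v l) ^ 2
      = d⁻¹ ^ 2 * (∑ l ∈ block s m i, v l) ^ 2 := mul_pow _ _ _
    _ ≤ d⁻¹ ^ 2 * (d * ∑ l ∈ block s m i, v l ^ 2) := by gcongr
    _ = d⁻¹ * ∑ l ∈ block s m i, v l ^ 2 := by field_simp

theorem sqNorm_blockAvg_mulVec_le (hs : Monotone s) {c : ℝ} (hc0 : 0 ≤ c)
    (hc : ∀ i < n, 1 ≤ c * ((s (i + 1) : ℝ) - s i)) (v : Fin m → ℝ) :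
    sqNorm (blockAvg s n m *ᵥ v) ≤ c * sqNorm v := by
  have hrow (i : Fin n) : (blockAvg s n m *ᵥ v) i ^ 2 ≤ c * ∑ l ∈ block s m i, v l ^ 2 := by
    refine (sq_blockAvg_mulVec_le hs v i).trans (mul_le_mul_of_nonneg_right ?_
      (sum_nonneg fun _ _ => sq_nonneg _))
    have h := hc i i.isLt
    have hd : 0 < (s (i.val + 1) : ℝ) - s i := pos_of_mul_pos_right (by linarith) hc0
    rw [inv_le_iff_one_le_mul₀' hd]
    linarith
  calc sqNorm (blockAvg s n m *ᵥ v) ≤ ∑ i : Fin n, c * ∑ l ∈ block s m i, v l ^ 2 :=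
        sum_le_sum fun i _ => hrow i
    _ = c * ∑ l ∈ univ.biUnion (fun i : Fin n => block s m i), v l ^ 2 := by
        rw [← mul_sum, sum_biUnion fun i _ j _ hij => disjoint_block hs (Fin.val_injective.ne hij)]
    _ ≤ c * sqNorm v := by
        gcongr
        exact sum_le_sum_of_subset_of_nonneg (subset_univ _) fun _ _ _ => sq_nonneg _

end Blocks

section AlignCut

variable {K : ℕ} {nk : Fin (K + 1) → ℕ}

/-- The cut points `Σ_k ⌈j n_k / n₀⌉` of `P̃^{n₀,{n_k}}` and `P^{{n_k},n₀}`. -/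
def alignCut (K : ℕ) (nk : Fin (K + 1) → ℕ) (j : ℕ) : ℕ := ∑ k, cdiv (j * nk k) (nk 0)

lemma alignPtMulti_eq_blockAvg :
    alignPtMulti K nk = blockAvg (alignCut K nk) (nk 0) (∑ k, nk k) := rfl

lemma alignPMulti_eq_blockInd :
    alignPMulti K nk = blockInd (alignCut K nk) (∑ k, nk k) (nk 0) := rfl

lemma alignCut_mono : Monotone (alignCut K nk) := fun _ _ h =>
  sum_le_sum fun _ _ => cdiv_le_cdiv _ (Nat.mul_le_mul_right _ h)

lemma alignCut_self (h : 0 < nk 0) : alignCut K nk (nk 0) = ∑ k, nk k :=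
  sum_congr rfl fun _ _ => cdiv_mul_cancel_left h _

/-- The source `k = 0` alone advances the cut by exactly one. -/
lemma alignCut_lt_succ (h : 0 < nk 0) (j : ℕ) : alignCut K nk j < alignCut K nk (j + 1) := by
  have hsplit (j : ℕ) : alignCut K nk j = j + ∑ k : Fin K, cdiv (j * nk k.succ) (nk 0) := by
    rw [alignCut, Fin.sum_univ_succ, mul_comm, cdiv_mul_cancel_left h]
  have hrest : ∑ k : Fin K, cdiv (j * nk k.succ) (nk 0) ≤
      ∑ k : Fin K, cdiv ((j + 1) * nk k.succ) (nk 0) :=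
    sum_le_sum fun _ _ => cdiv_le_cdiv _ (Nat.mul_le_mul_right _ (Nat.le_succ j))
  rw [hsplit, hsplit]
  omega

lemma sum_large_le_two_mul_alignCut_sub (h : 0 < nk 0) (j : ℕ) :
    (∑ k, if nk 0 ≤ nk k then (nk k : ℝ) else 0) ≤
      2 * nk 0 * ((alignCut K nk (j + 1) : ℝ) - alignCut K nk j) := by
  rw [alignCut, alignCut, Nat.cast_sum, Nat.cast_sum, ← sum_sub_distrib, mul_sum]
  refine sum_le_sum fun k _ => ?_
  have hmono : cdiv (j * nk k) (nk 0) ≤ cdiv ((j + 1) * nk k) (nk 0) :=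
    cdiv_le_cdiv _ (Nat.mul_le_mul_right _ (Nat.le_succ j))
  rw [← Nat.cast_sub hmono]
  split_ifs with hk
  · exact_mod_cast le_two_mul_cdiv_sub_cdiv h hk j
  · positivity

lemma sum_large_pos (h : 0 < nk 0) : 0 < ∑ k, if nk 0 ≤ nk k then (nk k : ℝ) else 0 := by
  refine lt_of_lt_of_le ?_ (single_le_sum (fun k _ => ?_) (mem_univ 0))
  · simpa using h
  · positivity

end AlignCut

theorem alignPtMulti_identities_general (n₀ K : ℕ)
    (nk : Fin (K + 1) → ℕ) (h0 : nk 0 = n₀) :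
    (alignPtMulti K nk * alignPMulti K nk = 1) ∧
      ∀ v : Fin (∑ k, nk k) → ℝ,
        sqNorm ((alignPtMulti K nk).mulVec v) ≤
          2 * (n₀ : ℝ) / (∑ k, if n₀ ≤ nk k then (nk k : ℝ) else 0) * sqNorm v := by
  subst h0
  rw [alignPtMulti_eq_blockAvg, alignPMulti_eq_blockInd]
  refine ⟨blockAvg_mul_blockInd alignCut_mono (fun i hi => alignCut_lt_succ (by omega) i)
    (fun i hi => ?_), sqNorm_blockAvg_mulVec_le alignCut_mono (by positivity) fun i hi => ?_⟩
  · exact (alignCut_mono hi).trans (alignCut_self (by omega)).le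
  · rw [div_mul_eq_mul_div, one_le_div₀ (sum_large_pos (by omega))]
    exact sum_large_le_two_mul_alignCut_sub (by omega) i

/-- **Lemma 9**: `P̃^{n₀,{n_k}} P^{{n_k},n₀} = I` and
`‖P̃^{n₀,{n_k}} v‖₂² ≤ (2n₀/N)‖v‖₂²` where `N = Σ_{k=0}^K n_k 1{n_k ≥ n₀}` and `n₀ = nk 0`. -/
theorem alignPtMulti_identities (n₀ K : ℕ) (hn₀ : 0 < n₀)
    (nk : Fin (K + 1) → ℕ) (hnk : ∀ k, 0 < nk k) (h0 : nk 0 = n₀) :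
    (alignPtMulti K nk * alignPMulti K nk = 1) ∧
      ∀ v : Fin (∑ k, nk k) → ℝ,
        sqNorm ((alignPtMulti K nk).mulVec v) ≤
          2 * (n₀ : ℝ) / (∑ k, if n₀ ≤ nk k then (nk k : ℝ) else 0) * sqNorm v :=
  alignPtMulti_identities_general n₀ K nk h0
end
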